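/- arXiv:2410.08074 — 2 statements merged into one kernel-verified Lean document; each statement's English description precedes it below -/
import Mathlib

section
/- Let S and C be linear subspaces of R^d with orthogonal projection matrices P_S and P_C. Then for any matrix X in R^{d×d}, the squared Frobenius norm of P_C X is at least λ_min(P_S P_C P_S) times the squared Frobenius norm of P_S X. -/
open Matrix

noncomputable section

/-- Smallest eigenvalue of a (Hermitian) real matrix; 0 if not Hermitian. -/
noncomputable def eigMin {d : ℕ} (A : Matrix (Fin d) (Fin d) ℝ) : ℝ :=
  if h : A.IsHermitian then ⨅ i, h.eigenvalues i else 0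

/-- Squared Frobenius norm. -/
def frobSq {d : ℕ} (A : Matrix (Fin d) (Fin d) ℝ) : ℝ := ∑ i, ∑ j, (A i j) ^ 2

/-- Quadratic form lower bound via the smallest eigenvalue. -/
lemma quadForm_ge_iInf_eig {d : ℕ} (A : Matrix (Fin d) (Fin d) ℝ) (hA : A.IsHermitian)
    (x : Fin d → ℝ) :
    (⨅ i, hA.eigenvalues i) * (x ⬝ᵥ x) ≤ x ⬝ᵥ (A *ᵥ x) := by
  rcases Nat.eq_zero_or_pos d with hd | hd
  · subst hd
    simp [dotProduct]
  · haveI : Nonempty (Fin d) := ⟨⟨0, hd⟩⟩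
    set U : Matrix (Fin d) (Fin d) ℝ := (hA.eigenvectorUnitary : Matrix (Fin d) (Fin d) ℝ) with hU
    have hUU : U * star U = 1 := (Matrix.mem_unitaryGroup_iff).mp (hA.eigenvectorUnitary).2
    set y : Fin d → ℝ := (star U) *ᵥ x with hy
    have hyvm : x ᵥ* U = y := by
      rw [hy, ← mulVec_transpose]
      congr 1
    have hxy : x ⬝ᵥ x = y ⬝ᵥ y := by
      calc x ⬝ᵥ x = x ⬝ᵥ ((U * star U) *ᵥ x) := by rw [hUU, one_mulVec]
        _ = x ⬝ᵥ (U *ᵥ y) := by rw [← mulVec_mulVec, ← hy]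
        _ = (x ᵥ* U) ⬝ᵥ y := dotProduct_mulVec _ _ _
        _ = y ⬝ᵥ y := by rw [hyvm]
    have hquad : x ⬝ᵥ (A *ᵥ x) = ∑ i, hA.eigenvalues i * (y i * y i) := by
      calc x ⬝ᵥ (A *ᵥ x)
          = x ⬝ᵥ (U *ᵥ ((diagonal (RCLike.ofReal ∘ hA.eigenvalues)) *ᵥ y)) := by
            rw [hy]
            conv_lhs => rw [hA.spectral_theorem]
            rw [Unitary.conjStarAlgAut_apply]
            rw [← mulVec_mulVec, ← mulVec_mulVec]
        _ = (x ᵥ* U) ⬝ᵥ ((diagonal (RCLike.ofReal ∘ hA.eigenvalues)) *ᵥ y) :=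
            dotProduct_mulVec _ _ _
        _ = ∑ i, hA.eigenvalues i * (y i * y i) := by
            rw [hyvm]
            simp [dotProduct, mulVec_diagonal]
            exact Finset.sum_congr rfl fun i _ => by ring
    rw [hquad, hxy, show y ⬝ᵥ y = ∑ i, y i * y i from rfl, Finset.mul_sum]
    apply Finset.sum_le_sum
    intro i _
    exact mul_le_mul_of_nonneg_right
      (ciInf_le (Set.Finite.bddBelow (Set.finite_range _)) i) (mul_self_nonneg _)

/-- For orthogonal projections `P_S`, `P_C` on `ℝ^d` and any matrix `X`,
`‖P_C X‖_F² ≥ λ_min(P_S P_C P_S) ‖P_S X‖_F²`. -/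
theorem frobSq_proj_ge_eigMin_mul
    {d : ℕ} (PS PC X : Matrix (Fin d) (Fin d) ℝ)
    (hPSsymm : PSᵀ = PS) (hPSidem : PS * PS = PS)
    (hPCsymm : PCᵀ = PC) (hPCidem : PC * PC = PC) :
    frobSq (PC * X) ≥ eigMin (PS * PC * PS) * frobSq (PS * X) := by
  have hA : (PS * PC * PS).IsHermitian := by
    simp only [Matrix.IsHermitian, conjTranspose_eq_transpose_of_trivial, transpose_mul,
      hPSsymm, hPCsymm, mul_assoc]
  have hfrob_nonneg : ∀ M : Matrix (Fin d) (Fin d) ℝ, 0 ≤ frobSq M := fun M =>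
    Finset.sum_nonneg fun i _ => Finset.sum_nonneg fun j _ => sq_nonneg _
  have heig : eigMin (PS * PC * PS) = ⨅ i, hA.eigenvalues i := dif_pos hA
  set lam := ⨅ i, hA.eigenvalues i with hlam
  rw [heig]
  rcases le_or_gt lam 0 with hl | hl
  · exact le_trans (mul_nonpos_of_nonpos_of_nonneg hl (hfrob_nonneg _)) (hfrob_nonneg _)
  · -- lam > 0 forces PS = 1
    have hPS1 : PS = 1 := by
      have key : ∀ v : Fin d → ℝ, PS *ᵥ v = v := by
        intro v
        set w : Fin d → ℝ := v - PS *ᵥ v with hw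
        have hPSw : PS *ᵥ w = 0 := by
          rw [hw, mulVec_sub, mulVec_mulVec, hPSidem, sub_self]
        have hAw : (PS * PC * PS) *ᵥ w = 0 := by
          rw [← mulVec_mulVec, hPSw, mulVec_zero]
        have hq := quadForm_ge_iInf_eig _ hA w
        rw [hAw, dotProduct_zero, ← hlam] at hq
        have hww : w ⬝ᵥ w = 0 := by
          have hnn : 0 ≤ w ⬝ᵥ w := Finset.sum_nonneg fun i _ => mul_self_nonneg (w i)
          nlinarith
        have : w = 0 := dotProduct_self_eq_zero.mp hww
        rw [hw, sub_eq_zero] at this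
        exact this.symm
      ext i j
      have := congrFun (key (Pi.single j 1)) i
      simpa [mulVec_single, Matrix.one_apply, Pi.single_apply, eq_comm] using this
    -- now reduce to columns
    have hcol : ∀ j, lam * ((fun i => X i j) ⬝ᵥ (fun i => X i j)) ≤ ∑ i, (PC * X) i j ^ 2 := by
      intro j
      set xj : Fin d → ℝ := fun i => X i j with hxj
      have h1 := quadForm_ge_iInf_eig _ hA xj
      rw [← hlam] at h1
      have h2 : (PS * PC * PS) *ᵥ xj = PC *ᵥ xj := by rw [hPS1, one_mul, mul_one]
      rw [h2] at h1
      have h3 : xj ⬝ᵥ (PC *ᵥ xj) = ∑ i, (PC * X) i j ^ 2 := by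
        have h4 : (PC *ᵥ xj) ⬝ᵥ (PC *ᵥ xj) = xj ⬝ᵥ (PC *ᵥ xj) := by
          calc (PC *ᵥ xj) ⬝ᵥ (PC *ᵥ xj) = ((PC *ᵥ xj) ᵥ* PC) ⬝ᵥ xj := dotProduct_mulVec _ _ _
            _ = (PCᵀ *ᵥ (PC *ᵥ xj)) ⬝ᵥ xj := by rw [← mulVec_transpose]
            _ = ((PCᵀ * PC) *ᵥ xj) ⬝ᵥ xj := by rw [mulVec_mulVec]
            _ = (PC *ᵥ xj) ⬝ᵥ xj := by rw [hPCsymm, hPCidem]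
            _ = xj ⬝ᵥ (PC *ᵥ xj) := dotProduct_comm _ _
        rw [← h4]
        simp only [dotProduct]
        refine Finset.sum_congr rfl fun i _ => ?_
        have : (PC * X) i j = (PC *ᵥ xj) i := by
          simp [mul_apply, mulVec, dotProduct, hxj]
        rw [this, sq]
      rw [← h3]
      exact h1
    have hfc : frobSq (PC * X) = ∑ j, ∑ i, (PC * X) i j ^ 2 := Finset.sum_comm
    have hfx : frobSq (PS * X) = ∑ j, (fun i => X i j) ⬝ᵥ (fun i => X i j) := by
      rw [hPS1, one_mul, frobSq, Finset.sum_comm]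
      exact Finset.sum_congr rfl fun j _ => Finset.sum_congr rfl fun i _ => sq (X i j)
    rw [hfc, hfx, Finset.mul_sum]
    exact Finset.sum_le_sum fun j _ => hcol j

end
end

section
/- Gradient resurgence bound: In the linear diffusion model with residual ε_W(x_t,t) = W x_t − ε, loss L_t(W) = E‖W x_t − ε‖², x_t = √α_t x₀ + √(1−α_t) ε with x₀ mean-zero covariance Σ, and ε ~ N(0,I) independent, suppose P_C W = 0 and P_C S ≠ 0 where S is the subspace spanned by fine-tuning gradient directions with projection P_S. Let γ(S,C) := λ_min(P_S P_C P_S). Then ‖P_C ∇_W L_t‖_F ≥ 2√(1−α_t)·√(γ(S,C)). -/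
open Matrix MeasureTheory

noncomputable section

/-- Frobenius norm of a real square matrix. -/
noncomputable def frobNorm {d : ℕ} (A : Matrix (Fin d) (Fin d) ℝ) : ℝ :=
  Real.sqrt (∑ i, ∑ j, (A i j) ^ 2)

/-- The minimal eigenvalue of `PS * PC * PS` is bounded by the squared Frobenius
norm of `PC`, for orthogonal projections `PC`, `PS`. -/
theorem eigMin_le_sq_frob {d : ℕ} (hd : 0 < d) (PC PS : Matrix (Fin d) (Fin d) ℝ)
    (hPCsymm : PCᵀ = PC) (hPCidem : PC * PC = PC)
    (hPSsymm : PSᵀ = PS) (hPSidem : PS * PS = PS) :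
    eigMin (PS * PC * PS) ≤ ∑ i, ∑ j, (PC i j) ^ 2 := by
  set B := PC * PS with hB
  have hBt : Bᵀ = PS * PC := by rw [hB, transpose_mul, hPCsymm, hPSsymm]
  have hA : (PS * PC * PS).IsHermitian := by
    have : (PS * PC * PS)ᴴ = (PS * PC * PS)ᵀ := by
      ext i j; simp [conjTranspose_apply]
    rw [Matrix.IsHermitian, this, transpose_mul, transpose_mul, hPSsymm, hPCsymm, mul_assoc]
  have hBtB : Bᵀ * B = PS * PC * PS := by
    rw [hBt, hB, mul_assoc, ← mul_assoc PC PC PS, hPCidem, ← mul_assoc]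
  rw [eigMin, dif_pos hA]
  have i₀ : Fin d := ⟨0, hd⟩
  have hmin : (⨅ i, hA.eigenvalues i) ≤ hA.eigenvalues i₀ :=
    ciInf_le (Set.Finite.bddBelow (Set.finite_range _)) i₀
  refine hmin.trans ?_
  set v : Fin d → ℝ := ⇑(hA.eigenvectorBasis i₀) with hv
  have hval : hA.eigenvalues i₀ = v ⬝ᵥ ((PS * PC * PS) *ᵥ v) := by
    have := hA.eigenvalues_eq i₀
    simpa [hv] using this
  have hnv : ∑ j, v j ^ 2 = 1 := by
    have hnorm : ‖hA.eigenvectorBasis i₀‖ = 1 :=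
      hA.eigenvectorBasis.orthonormal.1 i₀
    have := EuclideanSpace.norm_eq (hA.eigenvectorBasis i₀)
    rw [hnorm] at this
    have h2 : Real.sqrt (∑ j, ‖hA.eigenvectorBasis i₀ j‖ ^ 2) = 1 := this.symm
    have h3 : (∑ j, ‖hA.eigenvectorBasis i₀ j‖ ^ 2) = 1 := by
      have := congrArg (· ^ 2) h2
      simpa [Real.sq_sqrt (Finset.sum_nonneg fun _ _ => sq_nonneg _)] using this
    simpa [hv, Real.norm_eq_abs, sq_abs] using h3
  have hquad : v ⬝ᵥ ((PS * PC * PS) *ᵥ v) = ∑ i, (B *ᵥ v) i ^ 2 := by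
    rw [← hBtB, ← mulVec_mulVec, dotProduct_mulVec, ← transpose_transpose B,
      vecMul_transpose, transpose_transpose]
    simp [dotProduct, pow_two]
  rw [hval, hquad]
  have hrow : ∀ i, (B *ᵥ v) i ^ 2 ≤ ∑ j, B i j ^ 2 := by
    intro i
    have := Finset.sum_mul_sq_le_sq_mul_sq Finset.univ (fun j => B i j) v
    rw [hnv, mul_one] at this
    simpa [Matrix.mulVec, dotProduct] using this
  refine (Finset.sum_le_sum fun i _ => hrow i).trans ?_
  refine Finset.sum_le_sum fun i _ => ?_
  have hrowB : ∀ j, B i j = (PS *ᵥ fun k => PC i k) j := by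
    intro j
    simp only [hB, Matrix.mul_apply, Matrix.mulVec, dotProduct]
    refine Finset.sum_congr rfl fun k _ => ?_
    rw [show PS k j = PS j k by conv_lhs => rw [← hPSsymm, transpose_apply]]
    ring
  simp only [hrowB]
  set u : Fin d → ℝ := fun k => PC i k
  set w := PS *ᵥ u with hw
  have h1 : ∑ j, w j ^ 2 = ∑ j, u j * w j := by
    have : w ⬝ᵥ w = u ⬝ᵥ w := by
      rw [hw]
      calc (PS *ᵥ u) ⬝ᵥ (PS *ᵥ u) = (u ᵥ* PSᵀ) ⬝ᵥ (PS *ᵥ u) := by rw [vecMul_transpose]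
        _ = u ⬝ᵥ (PSᵀ *ᵥ (PS *ᵥ u)) := by rw [← dotProduct_mulVec]
        _ = u ⬝ᵥ ((PSᵀ * PS) *ᵥ u) := by rw [mulVec_mulVec]
        _ = u ⬝ᵥ (PS *ᵥ u) := by rw [hPSsymm, hPSidem]
    simpa [dotProduct, pow_two] using this
  have h2 : (∑ j, u j * w j) ^ 2 ≤ (∑ j, u j ^ 2) * ∑ j, w j ^ 2 :=
    Finset.sum_mul_sq_le_sq_mul_sq _ _ _
  have hX : 0 ≤ ∑ j, w j ^ 2 := Finset.sum_nonneg fun _ _ => sq_nonneg _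
  have hY : 0 ≤ ∑ j, u j ^ 2 := Finset.sum_nonneg fun _ _ => sq_nonneg _
  nlinarith [h1, h2, hX, hY]

/-- Gradient resurgence bound for the linear diffusion model: with residual
`ε_W(x_t) = W x_t - ε`, loss `L_t(W) = E‖W x_t - ε‖²` whose gradient is
`∇_W L_t = 2 E[(W x_t - ε) x_tᵀ]`, exact unlearning `P_C W = 0`, and leakage
`γ(S,C) := λ_min(P_S P_C P_S)` with `P_C P_S ≠ 0`, one has
`‖P_C ∇_W L_t‖_F ≥ 2 √(1-α_t) √(γ(S,C))`. -/
theorem gradient_resurgence_bound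
    {d : ℕ} {Ω : Type*} [MeasurableSpace Ω] (μ : Measure Ω) [IsProbabilityMeasure μ]
    (x₀ ε : Ω → Fin d → ℝ) (Sig W : Matrix (Fin d) (Fin d) ℝ) (α : ℝ)
    (hα : α ∈ Set.Icc (0 : ℝ) 1)
    (hIxx : ∀ i j, Integrable (fun ω => x₀ ω i * x₀ ω j) μ)
    (hIxe : ∀ i j, Integrable (fun ω => x₀ ω i * ε ω j) μ)
    (hIee : ∀ i j, Integrable (fun ω => ε ω i * ε ω j) μ)
    (hx0mean : ∀ i, ∫ ω, x₀ ω i ∂μ = 0)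
    (hSig : ∀ i j, ∫ ω, x₀ ω i * x₀ ω j ∂μ = Sig i j)
    (hεmean : ∀ i, ∫ ω, ε ω i ∂μ = 0)
    (hεcov : ∀ i j, ∫ ω, ε ω i * ε ω j ∂μ = if i = j then (1 : ℝ) else 0)
    (hindep : ∀ i j, ∫ ω, x₀ ω i * ε ω j ∂μ = 0)
    (xt : Ω → Fin d → ℝ)
    (hxt : ∀ ω i, xt ω i = Real.sqrt α * x₀ ω i + Real.sqrt (1 - α) * ε ω i)
    -- the gradient ∇_W L_t = 2 E[(W x_t - ε) x_tᵀ]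
    (grad : Matrix (Fin d) (Fin d) ℝ)
    (hgrad : ∀ i j,
      grad i j = 2 * ∫ ω, ((∑ k, W i k * xt ω k) - ε ω i) * xt ω j ∂μ)
    -- orthogonal projections onto the forgotten subspace C and the fine-tuning
    -- gradient subspace S
    (PC PS : Matrix (Fin d) (Fin d) ℝ)
    (hPCsymm : PCᵀ = PC) (hPCidem : PC * PC = PC)
    (hPSsymm : PSᵀ = PS) (hPSidem : PS * PS = PS)
    -- exact unlearning and nontrivial overlap
    (hPCW : PC * W = 0) (hPCS : PC * PS ≠ 0) :
    frobNorm (PC * grad) ≥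
      2 * Real.sqrt (1 - α) * Real.sqrt (eigMin (PS * PC * PS)) := by
  obtain ⟨hα0, hα1⟩ := hα
  have h1α : (0:ℝ) ≤ 1 - α := by linarith
  rcases Nat.eq_zero_or_pos d with hd | hd
  · subst hd
    exact absurd (Matrix.ext fun i _ => i.elim0) hPCS
  set s := Real.sqrt α with hs
  set t := Real.sqrt (1 - α) with ht
  have hss : s * s = α := Real.mul_self_sqrt hα0
  have htt : t * t = 1 - α := Real.mul_self_sqrt h1α
  have ht0 : 0 ≤ t := Real.sqrt_nonneg _
  -- Step 1: closed form of the gradient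
  have hxtprod : ∀ k j ω, xt ω k * xt ω j
      = (s*s) * (x₀ ω k * x₀ ω j) + (s*t) * (x₀ ω k * ε ω j)
        + (s*t) * (x₀ ω j * ε ω k) + (t*t) * (ε ω k * ε ω j) := by
    intro k j ω; rw [hxt, hxt]; ring
  have hIxt : ∀ k j, Integrable (fun ω => xt ω k * xt ω j) μ := by
    intro k j
    simp only [hxtprod k j]
    exact ((((hIxx k j).const_mul _).add ((hIxe k j).const_mul _)).add
      ((hIxe j k).const_mul _)).add ((hIee k j).const_mul _)
  have hintxt : ∀ k j, ∫ ω, xt ω k * xt ω j ∂μ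
      = α * Sig k j + (1-α) * (if k = j then (1:ℝ) else 0) := by
    intro k j
    have I1 : Integrable (fun ω => s*s * (x₀ ω k * x₀ ω j)) μ := (hIxx k j).const_mul _
    have I2 : Integrable (fun ω => s*t * (x₀ ω k * ε ω j)) μ := (hIxe k j).const_mul _
    have I3 : Integrable (fun ω => s*t * (x₀ ω j * ε ω k)) μ := (hIxe j k).const_mul _
    have I4 : Integrable (fun ω => t*t * (ε ω k * ε ω j)) μ := (hIee k j).const_mul _
    have I12 : Integrable (fun ω => s*s * (x₀ ω k * x₀ ω j) + s*t * (x₀ ω k * ε ω j)) μ :=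
      I1.add I2
    have I123 : Integrable (fun ω => s*s * (x₀ ω k * x₀ ω j) + s*t * (x₀ ω k * ε ω j)
        + s*t * (x₀ ω j * ε ω k)) μ := I12.add I3
    simp only [hxtprod k j]
    rw [integral_add I123 I4, integral_add I12 I3, integral_add I1 I2,
        integral_const_mul, integral_const_mul, integral_const_mul, integral_const_mul,
        hSig, hindep, hindep, hεcov, hss, htt]
    ring
  have hεxtprod : ∀ i j ω, ε ω i * xt ω j
      = s * (x₀ ω j * ε ω i) + t * (ε ω i * ε ω j) := by
    intro i j ω; rw [hxt]; ring
  have hIεxt : ∀ i j, Integrable (fun ω => ε ω i * xt ω j) μ := by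
    intro i j
    simp only [hεxtprod i j]
    exact ((hIxe j i).const_mul _).add ((hIee i j).const_mul _)
  have hintεxt : ∀ i j, ∫ ω, ε ω i * xt ω j ∂μ = t * (if i = j then (1:ℝ) else 0) := by
    intro i j
    have J1 : Integrable (fun ω => s * (x₀ ω j * ε ω i)) μ := (hIxe j i).const_mul _
    have J2 : Integrable (fun ω => t * (ε ω i * ε ω j)) μ := (hIee i j).const_mul _
    simp only [hεxtprod i j]
    rw [integral_add J1 J2, integral_const_mul, integral_const_mul, hindep, hεcov]
    ring
  have hgrad' : grad = (2:ℝ) • (W * (α • Sig + (1-α) • 1) -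
      t • (1 : Matrix (Fin d) (Fin d) ℝ)) := by
    ext i j
    rw [hgrad i j]
    have hfun : (fun ω => ((∑ k, W i k * xt ω k) - ε ω i) * xt ω j)
        = fun ω => (∑ k, W i k * (xt ω k * xt ω j)) - ε ω i * xt ω j := by
      funext ω
      rw [sub_mul, Finset.sum_mul]
      congr 1
      exact Finset.sum_congr rfl fun k _ => by ring
    rw [hfun, integral_sub (by exact integrable_finset_sum _ fun k _ => (hIxt k j).const_mul _)
        (hIεxt i j),
      integral_finset_sum _ fun k _ => (hIxt k j).const_mul _]
    simp only [integral_const_mul, hintxt, hintεxt]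
    simp only [Matrix.smul_apply, Matrix.sub_apply, Matrix.mul_apply, Matrix.add_apply,
      Matrix.one_apply, smul_eq_mul, mul_ite, mul_one, mul_zero]
  -- Step 2: PC * grad = -(2 t) • PC
  have hPCgrad : PC * grad = (-(2 * t)) • PC := by
    rw [hgrad', Matrix.mul_smul, Matrix.mul_sub, Matrix.mul_smul, Matrix.mul_one,
      ← Matrix.mul_assoc, hPCW, Matrix.zero_mul, zero_sub, smul_neg, smul_smul]
    rw [neg_smul, ← neg_smul]
  -- Step 3: Frobenius norm of PC * grad
  set Q := ∑ i, ∑ j, (PC i j) ^ 2 with hQ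
  have hQ0 : 0 ≤ Q := Finset.sum_nonneg fun _ _ => Finset.sum_nonneg fun _ _ => sq_nonneg _
  have hfrob : frobNorm (PC * grad) = 2 * t * Real.sqrt Q := by
    rw [frobNorm, hPCgrad]
    have : ∑ i, ∑ j, ((-(2*t)) • PC) i j ^ 2 = (2*t)^2 * Q := by
      rw [hQ, Finset.mul_sum]
      refine Finset.sum_congr rfl fun i _ => ?_
      rw [Finset.mul_sum]
      refine Finset.sum_congr rfl fun j _ => ?_
      simp [Matrix.smul_apply, smul_eq_mul]
      ring
    rw [this, Real.sqrt_mul (sq_nonneg _), Real.sqrt_sq (by positivity)]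
  rw [hfrob]
  -- Step 4: eigenvalue bound
  have heig : eigMin (PS * PC * PS) ≤ Q :=
    eigMin_le_sq_frob hd PC PS hPCsymm hPCidem hPSsymm hPSidem
  have := Real.sqrt_le_sqrt heig
  nlinarith [Real.sqrt_nonneg (eigMin (PS * PC * PS)), Real.sqrt_nonneg Q, ht0]

end
end
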